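/- Let m be an even positive integer and let 𝒞 be the order m dimension n symmetric Cauchy tensor with generating vector c ∈ ℝ^n, and define f(x) = 𝒞x^m. Then 𝒞 is positive semi-definite if and only if f is monotone increasing on the nonnegative orthant, i.e., for all x, y ∈ ℝ^n with 0 ≤ y ≤ x (componentwise), f(y) ≤ f(x). -/

import Mathlib

/-!
Both conditions are equivalent to `0 < c`. Since `f (e_k) = 1 / (m c_k)` and `f 0 = 0`, either
condition forces every `c_k > 0`. Conversely, if `0 < c` every term of `f` has a positive
denominator, which gives monotonicity on the orthant, and `1 / s = ∫₀¹ t^(s-1) dt` turns `f x` into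
`∫₀¹ (∑ₖ xₖ t^(c_k))^m / t dt`, which is nonnegative for even `m`.
-/

open Finset

noncomputable def cauchyForm {ι : Type*} [Fintype ι] (m : ℕ) (c x : ι → ℝ) : ℝ :=
  ∑ i : Fin m → ι, (∏ j, x (i j)) / ∑ j, c (i j)

theorem inv_eq_integral_rpow {s : ℝ} (hs : 0 < s) : s⁻¹ = ∫ t in (0 : ℝ)..1, t ^ (s - 1) := by
  rw [integral_rpow (Or.inl (by linarith)), sub_add_cancel, Real.one_rpow,
    Real.zero_rpow hs.ne', sub_zero, one_div]

namespace cauchyForm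

variable {ι : Type*} [Fintype ι] {m : ℕ} {c : ι → ℝ}

theorem apply_zero (hm : m ≠ 0) : cauchyForm m c 0 = 0 := by
  have : Nonempty (Fin m) := ⟨⟨0, Nat.pos_of_ne_zero hm⟩⟩
  simp [cauchyForm, hm]

theorem apply_single [DecidableEq ι] (k : ι) : cauchyForm m c (Pi.single k 1) = (m * c k)⁻¹ := by
  rw [cauchyForm, sum_eq_single_of_mem (fun _ => k) (mem_univ _)]
  · simp
  · intro i _ hi
    obtain ⟨j, hj⟩ : ∃ j, i j ≠ k := by
      by_contra! h
      exact hi (funext h)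
    rw [prod_eq_zero (mem_univ j) (by simp [hj]), zero_div]

theorem pos_of_apply_single_nonneg [DecidableEq ι] {k : ι} (hm : 0 < m) (hck : c k ≠ 0)
    (h : 0 ≤ cauchyForm m c (Pi.single k 1)) : 0 < c k := by
  rw [apply_single, inv_nonneg] at h
  exact lt_of_le_of_ne (nonneg_of_mul_nonneg_right h (Nat.cast_pos.2 hm)) hck.symm

theorem monotoneOn (hc : ∀ k, 0 < c k) : MonotoneOn (cauchyForm m c) (Set.Ici 0) :=
  fun _ hy _ _ hxy => sum_le_sum fun _ _ =>
    div_le_div_of_nonneg_right (prod_le_prod (fun _ _ => hy _) fun _ _ => hxy _)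
      (sum_nonneg fun _ _ => (hc _).le)

theorem sum_prod_mul_rpow {t : ℝ} (ht : 0 < t) (x : ι → ℝ) :
    ∑ i : Fin m → ι, (∏ j, x (i j)) * t ^ (∑ j, c (i j) - 1) = (∑ k, x k * t ^ c k) ^ m / t := by
  rw [Fintype.sum_pow, sum_div]
  refine sum_congr rfl fun i _ => ?_
  rw [prod_mul_distrib, ← Real.rpow_sum_of_pos ht, Real.rpow_sub ht, Real.rpow_one, mul_div_assoc]

theorem eq_integral (hm : 0 < m) (hc : ∀ k, 0 < c k) (x : ι → ℝ) :
    cauchyForm m c x =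
      ∫ t in (0 : ℝ)..1, ∑ i : Fin m → ι, (∏ j, x (i j)) * t ^ (∑ j, c (i j) - 1) := by
  have : Nonempty (Fin m) := ⟨⟨0, hm⟩⟩
  have hs (i : Fin m → ι) : 0 < ∑ j, c (i j) := sum_pos (fun _ _ => hc _) univ_nonempty
  rw [intervalIntegral.integral_finsetSum fun i _ =>
    ((intervalIntegral.intervalIntegrable_rpow' (by linarith [hs i])).const_mul _)]
  refine sum_congr rfl fun i _ => ?_
  rw [intervalIntegral.integral_const_mul, ← inv_eq_integral_rpow (hs i), div_eq_mul_inv]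

theorem nonneg (hm : 0 < m) (hme : Even m) (hc : ∀ k, 0 < c k) (x : ι → ℝ) :
    0 ≤ cauchyForm m c x := by
  rw [eq_integral hm hc, intervalIntegral.integral_of_le zero_le_one]
  refine MeasureTheory.setIntegral_nonneg measurableSet_Ioc fun t ht => ?_
  rw [sum_prod_mul_rpow ht.1]
  exact div_nonneg (hme.pow_nonneg _) ht.1.le

variable [DecidableEq ι]

theorem forall_nonneg_iff (hm : 0 < m) (hme : Even m) (hc : ∀ k, c k ≠ 0) :
    (∀ x, 0 ≤ cauchyForm m c x) ↔ ∀ k, 0 < c k :=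
  ⟨fun h k => pos_of_apply_single_nonneg hm (hc k) (h _), nonneg hm hme⟩

theorem monotoneOn_iff (hm : 0 < m) (hc : ∀ k, c k ≠ 0) :
    MonotoneOn (cauchyForm m c) (Set.Ici 0) ↔ ∀ k, 0 < c k := by
  refine ⟨fun h k => pos_of_apply_single_nonneg hm (hc k) ?_, monotoneOn⟩
  rw [← apply_zero (c := c) hm.ne']
  have hsingle : (0 : ι → ℝ) ≤ Pi.single k 1 := Pi.single_nonneg.2 zero_le_one
  exact h Set.self_mem_Ici hsingle hsingle

end cauchyForm

/-- An even order symmetric Cauchy tensor is positive semi-definite iff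
the homogeneous polynomial `f(x) = 𝒞xᵐ` is monotone increasing on the nonnegative
orthant. -/
theorem cauchy_tensor_psd_iff_monotone
    (m n : ℕ) (hm : 0 < m) (hme : Even m) (c : Fin n → ℝ)
    (hc : ∀ i : Fin m → Fin n, (∑ j, c (i j)) ≠ 0) :
    (∀ x : Fin n → ℝ,
        0 ≤ ∑ i : Fin m → Fin n, (∏ j, x (i j)) / (∑ j, c (i j))) ↔
      (∀ x y : Fin n → ℝ, (∀ i, 0 ≤ y i) → (∀ i, y i ≤ x i) →
        (∑ i : Fin m → Fin n, (∏ j, y (i j)) / (∑ j, c (i j)))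
          ≤ ∑ i : Fin m → Fin n, (∏ j, x (i j)) / (∑ j, c (i j))) := by
  have hck (k : Fin n) : c k ≠ 0 := by
    simpa [hm.ne'] using hc fun _ => k
  calc (∀ x, 0 ≤ cauchyForm m c x)
      ↔ MonotoneOn (cauchyForm m c) (Set.Ici 0) :=
        (cauchyForm.forall_nonneg_iff hm hme hck).trans (cauchyForm.monotoneOn_iff hm hck).symm
    _ ↔ _ := ⟨fun h x y hy hxy => h hy (hy.trans hxy) hxy, fun h y hy x _ hxy => h x y hy hxy⟩
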